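/- Let n = 2^d. The number of inputs X ∈ {0,1}ⁿ such that T_d(X) = 1 is odd. -/

import Mathlib

/-! Let `b` be the neutral element of the root gate of `T_{d+1}` (`true` for AND, `false` for OR).
Then `T_{d+1}(X) = b` exactly when both halves of `X` evaluate to `b`, so the number of such
inputs is the square of the corresponding count for `T_d`. Since the total number `2^{2^d}` of
inputs is even, the counts of ones and of zeros of `T_d` have the same parity; hence by induction
both are odd for every `d`. -/

/-- The complete binary AND/OR tree `T_d : {0,1}^{2^d} → {0,1}`:
`T_0(x) = x`; for `d > 0`, the root is an AND gate if `d` is odd and an OR gate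
if `d` is even, applied to the two half-trees `T_{d-1}`. -/
def andOrTree : (d : ℕ) → (Fin (2 ^ d) → Bool) → Bool
  | 0, X => X ⟨0, by norm_num⟩
  | d + 1, X =>
    let L := andOrTree d (fun i =>
      X (Fin.castLE (Nat.pow_le_pow_right (by norm_num) (Nat.le_succ d)) i))
    let R := andOrTree d (fun i =>
      X ⟨2 ^ d + i.val, by have := i.isLt; rw [pow_succ]; omega⟩)
    if (d + 1) % 2 = 1 then L && R else L || R

open Finset

theorem odd_card_filter_eq_not_of_even_card {β : Type*} [Fintype β]
    (hβ : Even (Fintype.card β)) (f : β → Bool) (b : Bool) (hb : Odd #{x | f x = b}) :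
    Odd #{x | f x = !b} := by
  have hcompl : #{x | f x = !b} = Fintype.card β - #{x | f x = b} := by
    rw [← card_univ, ← card_filter_add_card_filter_not (s := univ) (fun x => f x = b)]
    simp [Bool.eq_not_iff]
  rw [hcompl]
  exact Nat.Even.sub_odd (card_le_univ _) hβ hb

theorem even_card_fun_bool (ι : Type*) [Fintype ι] [DecidableEq ι] [Nonempty ι] :
    Even (Fintype.card (ι → Bool)) := by
  rw [Fintype.card_fun, Fintype.card_bool]
  exact (Nat.even_pow' Fintype.card_ne_zero).mpr even_two

/-- Its two components are definitionally the halves that `andOrTree` reads (see `succ_apply`). -/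
def halvesEquiv (α : Type*) (d : ℕ) :
    (Fin (2 ^ (d + 1)) → α) ≃ (Fin (2 ^ d) → α) × (Fin (2 ^ d) → α) :=
  ((finCongr (pow_succ' 2 d ▸ two_mul (2 ^ d))).arrowCongr (Equiv.refl α)).trans
    (Fin.appendEquiv _ _).symm

theorem card_filter_halvesEquiv {α : Type*} [Fintype α] [DecidableEq α] (d : ℕ)
    (p q : (Fin (2 ^ d) → α) → Prop) [DecidablePred p] [DecidablePred q] :
    #{X | p (halvesEquiv α d X).1 ∧ q (halvesEquiv α d X).2} = #{Y | p Y} * #{Y | q Y} := by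
  rw [← card_product, ← filter_product]
  exact card_equiv (halvesEquiv α d) (by simp)

namespace andOrTree

/-- The neutral element of the gate at the root of `andOrTree (d + 1)`. -/
def gateUnit (d : ℕ) : Bool := decide ((d + 1) % 2 = 1)

theorem succ_apply (d : ℕ) (X : Fin (2 ^ (d + 1)) → Bool) :
    andOrTree (d + 1) X =
      let L := andOrTree d (halvesEquiv Bool d X).1
      let R := andOrTree d (halvesEquiv Bool d X).2
      if (d + 1) % 2 = 1 then L && R else L || R :=
  rfl

theorem succ_eq_gateUnit_iff (d : ℕ) (X : Fin (2 ^ (d + 1)) → Bool) :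
    andOrTree (d + 1) X = gateUnit d ↔
      andOrTree d (halvesEquiv Bool d X).1 = gateUnit d ∧
        andOrTree d (halvesEquiv Bool d X).2 = gateUnit d := by
  by_cases h : (d + 1) % 2 = 1 <;> simp [succ_apply, gateUnit, h]

theorem card_succ_eq_gateUnit (d : ℕ) :
    #{X | andOrTree (d + 1) X = gateUnit d} = #{Y | andOrTree d Y = gateUnit d} ^ 2 := by
  simp only [succ_eq_gateUnit_iff, sq]
  exact card_filter_halvesEquiv d (andOrTree d · = gateUnit d) (andOrTree d · = gateUnit d)

theorem odd_card_eq (d : ℕ) (b : Bool) : Odd #{X | andOrTree d X = b} := by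
  induction d generalizing b with
  | zero => cases b <;> decide
  | succ d ih =>
    have hunit : Odd #{X | andOrTree (d + 1) X = gateUnit d} := by
      rw [card_succ_eq_gateUnit]
      exact (ih _).pow
    obtain rfl | rfl := Bool.eq_or_eq_not b (gateUnit d)
    · exact hunit
    · exact odd_card_filter_eq_not_of_even_card (even_card_fun_bool _) _ _ hunit

end andOrTree

/-- The number of inputs `X ∈ {0,1}^{2^d}` with `T_d(X) = 1` is odd. -/
theorem andOrTree_ones_odd (d : ℕ) :
    Odd (Finset.univ.filter
      (fun X : Fin (2 ^ d) → Bool => andOrTree d X = true)).card :=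
  andOrTree.odd_card_eq d true
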